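/- With H = 1/4 and the same notation, for each fixed l ∈ {0,…,n−1}, the sum over k from 0 to n−1 of |⟨ε_{l/n}, δ_{k/n}⟩| is at most 1/2 + (1/(2√n))(√l + √(n−l)); in particular the supremum over l of these sums is O(1) as n → ∞. -/

import Mathlib

open Real Finset

/-- `⟨ε_{l/n}, δ_{k/n}⟩ = (1/(2√n))(√(k+1) − √k − √|k+1−l| + √|k−l|)`. -/
noncomputable def epsDeltaInner (n k l : ℕ) : ℝ :=
  (1 / (2 * Real.sqrt n)) *
    (Real.sqrt (k + 1) - Real.sqrt k
      - Real.sqrt (|(k : ℝ) + 1 - l|) + Real.sqrt (|(k : ℝ) - l|))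

/-! Each inner product is `(u (k+1) - u k) - (v (k+1) - v k)` up to the factor `1/(2√n)`, with
`u k = √k` monotone and `v k = √|k - l|` decreasing up to `l` and increasing after it. Hence the
sum of absolute values is at most the total variations of `u` and `v` on `[0, n]`, namely `√n` and
`√l + √(n - l)`, and `√n / (2√n) = 1/2`. -/

section TotalVariation

variable {α : Type*} [AddCommGroup α] [LinearOrder α] [IsOrderedAddMonoid α] {f : ℕ → α}
  {a b c : ℕ}

theorem sum_Ico_abs_sub_of_monotoneOn (hab : a ≤ b) (hf : MonotoneOn f (Set.Icc a b)) :
    ∑ k ∈ Ico a b, |f (k + 1) - f k| = f b - f a := by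
  rw [← sum_Ico_sub f hab]
  refine sum_congr rfl fun k hk => abs_of_nonneg (sub_nonneg.2 (hf ?_ ?_ k.le_succ))
  all_goals simp only [mem_Ico] at hk; simp only [Set.mem_Icc]; omega

theorem sum_Ico_abs_sub_of_antitoneOn (hab : a ≤ b) (hf : AntitoneOn f (Set.Icc a b)) :
    ∑ k ∈ Ico a b, |f (k + 1) - f k| = f a - f b := by
  have h := sum_Ico_abs_sub_of_monotoneOn hab hf.neg
  simp only [neg_sub_neg] at h
  rw [← h]
  exact sum_congr rfl fun k _ => abs_sub_comm _ _

theorem sum_Ico_abs_sub_of_antitoneOn_of_monotoneOn (hab : a ≤ b) (hbc : b ≤ c)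
    (hf₁ : AntitoneOn f (Set.Icc a b)) (hf₂ : MonotoneOn f (Set.Icc b c)) :
    ∑ k ∈ Ico a c, |f (k + 1) - f k| = (f a - f b) + (f c - f b) := by
  rw [← sum_Ico_consecutive _ hab hbc, sum_Ico_abs_sub_of_antitoneOn hab hf₁,
    sum_Ico_abs_sub_of_monotoneOn hbc hf₂]

end TotalVariation

theorem monotone_sqrt_natCast : Monotone fun k : ℕ => √(k : ℝ) :=
  fun _ _ h => Real.sqrt_le_sqrt (Nat.cast_le.2 h)

theorem antitoneOn_sqrt_abs_natCast_sub (l : ℕ) :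
    AntitoneOn (fun k : ℕ => √(|(k : ℝ) - l|)) (Set.Iic l) := by
  intro i hi j hj hij
  simp only [Set.mem_Iic] at hi hj
  have : (i : ℝ) ≤ j := Nat.cast_le.2 hij
  have : (j : ℝ) ≤ l := Nat.cast_le.2 hj
  refine Real.sqrt_le_sqrt ?_
  rw [abs_of_nonpos (by linarith), abs_of_nonpos (by linarith)]
  linarith

theorem monotoneOn_sqrt_abs_natCast_sub (l : ℕ) :
    MonotoneOn (fun k : ℕ => √(|(k : ℝ) - l|)) (Set.Ici l) := by
  intro i hi j hj hij
  simp only [Set.mem_Ici] at hi hj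
  have : (i : ℝ) ≤ j := Nat.cast_le.2 hij
  have : (l : ℝ) ≤ i := Nat.cast_le.2 hi
  refine Real.sqrt_le_sqrt ?_
  rw [abs_of_nonneg (by linarith), abs_of_nonneg (by linarith)]
  linarith

theorem sum_range_abs_sqrt_natCast_succ_sub (n : ℕ) :
    ∑ k ∈ range n, |√((k + 1 : ℕ) : ℝ) - √(k : ℝ)| = √(n : ℝ) := by
  rw [range_eq_Ico, sum_Ico_abs_sub_of_monotoneOn n.zero_le (monotone_sqrt_natCast.monotoneOn _)]
  simp

theorem sum_range_abs_sqrt_abs_natCast_succ_sub {n l : ℕ} (hl : l ≤ n) :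
    ∑ k ∈ range n, |√(|((k + 1 : ℕ) : ℝ) - l|) - √(|(k : ℝ) - l|)|
      = √(l : ℝ) + √((n : ℝ) - l) := by
  rw [range_eq_Ico, sum_Ico_abs_sub_of_antitoneOn_of_monotoneOn l.zero_le hl
    ((antitoneOn_sqrt_abs_natCast_sub l).mono Set.Icc_subset_Iic_self)
    ((monotoneOn_sqrt_abs_natCast_sub l).mono Set.Icc_subset_Ici_self)]
  simp [abs_of_nonneg (sub_nonneg.2 (Nat.cast_le.2 hl))]

theorem abs_epsDeltaInner_le (n k l : ℕ) :
    |epsDeltaInner n k l| ≤ 1 / (2 * √(n : ℝ)) *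
      (|√((k + 1 : ℕ) : ℝ) - √(k : ℝ)| + |√(|((k + 1 : ℕ) : ℝ) - l|) - √(|(k : ℝ) - l|)|) := by
  have hc : 0 ≤ 1 / (2 * √(n : ℝ)) := by positivity
  rw [epsDeltaInner, abs_mul, abs_of_nonneg hc]
  refine mul_le_mul_of_nonneg_left ?_ hc
  push_cast
  rw [sub_add]
  exact abs_sub _ _

theorem sum_abs_epsDeltaInner_le {n l : ℕ} (hn : 1 ≤ n) (hl : l ≤ n) :
    ∑ k ∈ range n, |epsDeltaInner n k l|
      ≤ 1 / 2 + 1 / (2 * √(n : ℝ)) * (√(l : ℝ) + √((n : ℝ) - l)) := by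
  have hsqrt : √(n : ℝ) ≠ 0 := by positivity
  calc ∑ k ∈ range n, |epsDeltaInner n k l|
      ≤ ∑ k ∈ range n, 1 / (2 * √(n : ℝ)) *
          (|√((k + 1 : ℕ) : ℝ) - √(k : ℝ)| + |√(|((k + 1 : ℕ) : ℝ) - l|) - √(|(k : ℝ) - l|)|) :=
        sum_le_sum fun k _ => abs_epsDeltaInner_le n k l
    _ = 1 / (2 * √(n : ℝ)) * (√(n : ℝ) + (√(l : ℝ) + √((n : ℝ) - l))) := by
        rw [← mul_sum, sum_add_distrib, sum_range_abs_sqrt_natCast_succ_sub,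
          sum_range_abs_sqrt_abs_natCast_succ_sub hl]
    _ = 1 / 2 + 1 / (2 * √(n : ℝ)) * (√(l : ℝ) + √((n : ℝ) - l)) := by
        field_simp

theorem sqrt_add_sqrt_sub_le {x y : ℝ} (hx : 0 ≤ x) (hxy : x ≤ y) : √x + √(y - x) ≤ 2 * √y := by
  linarith [Real.sqrt_le_sqrt hxy, Real.sqrt_le_sqrt (show y - x ≤ y by linarith)]

theorem sum_abs_epsDeltaInner_bound :
    (∀ n : ℕ, 1 ≤ n → ∀ l : ℕ, l < n →
      ∑ k ∈ Finset.range n, |epsDeltaInner n k l|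
        ≤ 1 / 2 + (1 / (2 * Real.sqrt n)) * (Real.sqrt l + Real.sqrt ((n : ℝ) - l)))
    ∧ ∃ C : ℝ, ∀ n : ℕ, 1 ≤ n → ∀ l : ℕ, l < n →
        ∑ k ∈ Finset.range n, |epsDeltaInner n k l| ≤ C := by
  have bound := fun n (hn : 1 ≤ n) l (hl : l < n) => sum_abs_epsDeltaInner_le hn hl.le
  refine ⟨bound, 3 / 2, fun n hn l hl => (bound n hn l hl).trans ?_⟩
  have hsqrt : 0 < √(n : ℝ) := by positivity
  have hvar : 1 / (2 * √(n : ℝ)) * (√(l : ℝ) + √((n : ℝ) - l)) ≤ 1 := by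
    rw [div_mul_eq_mul_div, one_mul, div_le_one (by positivity)]
    exact sqrt_add_sqrt_sub_le l.cast_nonneg (Nat.cast_le.2 hl.le)
  linarith
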